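/- arXiv:2306.01127 — 4 statements merged into one kernel-verified Lean document; each statement's English description precedes it below -/
import Mathlib

section
/- For w ∈ S_n and 1 ≤ i < j ≤ n, define M_{i,j}(w) = #{k : i < k < j and w(k) < w(i)}. Then M_{i,j} satisfies the recursion: M_{i,j}(w) = 0 if j ≤ i+1, and for j > i+1, M_{i,j}(w) = M_{i,j-1}(w) + 1 if α_{j-1} < α_i − M_{i,j-1}(w), and M_{i,j}(w) = M_{i,j-1}(w) otherwise, where α is the code of w. -/
/-!
Split the positions after `i` that carry a value below `w i` into those before `j'`
(counted by `M_{i,j'}`), the position `j'` itself, and those after `j'`. Comparing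
thresholds, the last group has at least `α_{j'}` elements when `w j' < w i` and at most
`α_{j'}` elements when `w i < w j'`, so `α_{j'} < α_i - M_{i,j'}` holds exactly when
`w j' < w i`, which is exactly when `M` grows by one at `j'`.
-/

/-- The Lehmer code of a permutation: `code w i = #{k > i : w k < w i}`. -/
def permCode {n : ℕ} (w : Equiv.Perm (Fin n)) (i : Fin n) : ℕ :=
  (Finset.univ.filter (fun k : Fin n => i < k ∧ w k < w i)).card

/-- The extended matrix `M_{i,j}(w) = #{k : i < k < j, w k < w i}` (0-based positions,
`j` exclusive). -/
def Mmat {n : ℕ} (w : Equiv.Perm (Fin n)) (i : Fin n) (j : ℕ) : ℕ :=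
  (Finset.univ.filter (fun k : Fin n => (i : ℕ) < (k : ℕ) ∧ (k : ℕ) < j ∧ w k < w i)).card

namespace Equiv.Perm

variable {n : ℕ} (w : Equiv.Perm (Fin n))

def countBelowAfter (j v : Fin n) : ℕ :=
  (Finset.univ.filter (fun k : Fin n => j < k ∧ w k < v)).card

theorem permCode_eq_countBelowAfter (j : Fin n) : permCode w j = w.countBelowAfter j (w j) :=
  rfl

theorem countBelowAfter_mono (j : Fin n) : Monotone (w.countBelowAfter j) := fun _ _ hv =>
  Finset.card_le_card fun _ hk => by
    simp only [Finset.mem_filter] at hk ⊢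
    exact ⟨hk.1, hk.2.1, hk.2.2.trans_le hv⟩

end Equiv.Perm

open Equiv.Perm

section

variable {n : ℕ} (w : Equiv.Perm (Fin n))

theorem Mmat_eq_zero_of_le {i : Fin n} {j : ℕ} (hj : j ≤ (i : ℕ) + 1) : Mmat w i j = 0 := by
  rw [Mmat, Finset.card_eq_zero, Finset.filter_eq_empty_iff]
  intro k _ hk
  omega

theorem Mmat_succ {i j : Fin n} (hij : i < j) :
    Mmat w i (j + 1) = Mmat w i j + if w j < w i then 1 else 0 := by
  have hj : (Finset.univ.filter fun k => k = j ∧ w k < w i).card =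
      if w j < w i then 1 else 0 := by
    rw [Finset.card_filter]
    simp only [ite_and, Finset.sum_ite_eq', Finset.mem_univ, if_true]
  rw [Mmat, Mmat, ← hj, ← Finset.card_union_of_disjoint]
  · congr 1
    ext k
    simp only [Finset.mem_filter, Finset.mem_union, Finset.mem_univ, true_and, Fin.ext_iff]
    have := Fin.lt_def.mp hij
    omega
  · rw [Finset.disjoint_filter]
    rintro k - hk ⟨rfl, -⟩
    omega

theorem Mmat_succ_add_countBelowAfter {i j : Fin n} (hij : i < j) :
    Mmat w i (j + 1) + w.countBelowAfter j (w i) = permCode w i := by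
  rw [Mmat, countBelowAfter, permCode, ← Finset.card_union_of_disjoint]
  · congr 1
    ext k
    simp only [Finset.mem_filter, Finset.mem_union, Finset.mem_univ, true_and, Fin.lt_def]
    have := Fin.lt_def.mp hij
    omega
  · rw [Finset.disjoint_filter]
    intro k _ hk hjk
    rw [Fin.lt_def] at hjk
    omega

theorem permCode_lt_sub_Mmat_iff {i j : Fin n} (hij : i < j) :
    permCode w j < permCode w i - Mmat w i j ↔ w j < w i := by
  have hsplit := Mmat_succ_add_countBelowAfter w hij
  rw [Mmat_succ w hij] at hsplit
  rw [permCode_eq_countBelowAfter w j]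
  rcases lt_or_gt_of_ne (w.injective.ne hij.ne') with hlt | hgt
  · have := w.countBelowAfter_mono j hlt.le
    rw [if_pos hlt] at hsplit
    exact iff_of_true (by omega) hlt
  · have := w.countBelowAfter_mono j hgt.le
    rw [if_neg hgt.not_gt] at hsplit
    exact iff_of_false (by omega) hgt.not_gt

end

/-- The recursion for `M_{i,j}`: it vanishes for `j ≤ i+1`, and for `j > i+1` it increases
from `M_{i,j-1}` by one exactly when `α_{j-1} < α_i − M_{i,j-1}`, where `α` is the code. -/
theorem Mmat_recursion {n : ℕ} (w : Equiv.Perm (Fin n)) (i : Fin n) (j : ℕ) :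
    (j ≤ (i : ℕ) + 1 → Mmat w i j = 0) ∧
    (∀ j' : Fin n, (j' : ℕ) + 1 = j → (i : ℕ) + 1 < j →
      Mmat w i j = Mmat w i (j - 1) +
        (if permCode w j' < permCode w i - Mmat w i (j - 1) then 1 else 0)) := by
  refine ⟨Mmat_eq_zero_of_le w, ?_⟩
  rintro j' rfl hij
  have hij' : i < j' := Fin.lt_def.mpr (by omega)
  rw [Nat.add_sub_cancel, Mmat_succ w hij',
    if_congr (permCode_lt_sub_Mmat_iff w hij').symm rfl rfl]
end

section
/- Let w, w' ∈ S_n with codes α, α'. Then w covers w' in the Bruhat order with w' = w · (i,j) (for some i < j) if and only if: (a1) α'_i ≤ α_i − 1; (a2) α'_j = α_j + α_i − α'_i − 1; (a3) α'_k = α_k for all k ≠ i, j; and (a4) M_{i,j}(w) = M_{i,j}(w') = α'_i − α_j. -/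
/-- The length of a permutation is its number of inversions. -/
def permLen {n : ℕ} (w : Equiv.Perm (Fin n)) : ℕ :=
  (Finset.univ.filter (fun p : Fin n × Fin n => p.1 < p.2 ∧ w p.2 < w p.1)).card

/-- One step in the Bruhat order: multiply on the right by a transposition and increase
the length. -/
def bruhatStep {n : ℕ} (u v : Equiv.Perm (Fin n)) : Prop :=
  (∃ a b : Fin n, a ≠ b ∧ v = u * Equiv.swap a b) ∧ permLen u < permLen v

/-- The strict strong Bruhat order on `S_n`. -/
def bruhatLT {n : ℕ} (u v : Equiv.Perm (Fin n)) : Prop :=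
  Relation.TransGen bruhatStep u v

/-- `w` covers `w'` in the strong Bruhat order: `w' < w` and there is no intermediate
element. -/
def bruhatCovers {n : ℕ} (w w' : Equiv.Perm (Fin n)) : Prop :=
  bruhatLT w' w ∧ ∀ z : Equiv.Perm (Fin n), bruhatLT w' z → ¬ bruhatLT z w

/-!
Let `u` be whichever of `w`, `w'` satisfies `u i < u j`, so that the other one is `u (i j)`.
Right multiplication by `(i j)` leaves the code unchanged outside `[i, j]`; at a position
`k ∈ (i, j)` it changes the code by one exactly when `u k` lies strictly between `u i` and `u j`,
i.e. when `(k, u k)` is inside the rectangle spanned by `(i, u i)` and `(j, u j)`. Adding up,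
`ℓ(u (i j)) = ℓ(u) + 2r + 1` where `r` counts these points. If `w i < w j` the length of `w'`
exceeds that of `w` and (a1) fails. Otherwise `w` covers `w'` iff `r = 0`: a point `k` inside the
rectangle factors `u < u (i j)` through `u (i k)` and `u (i k) (k j)`, while for `r = 0` the
length grows by one. The explicit code formulas at `i`, at `j` and for `M_{i,j}` show that
(a1)–(a4) also hold exactly when `r = 0`.
-/

open Finset Equiv

section SwapCode

variable {n : ℕ}

lemma permLen_eq_sum_permCode (u : Perm (Fin n)) : permLen u = ∑ k, permCode u k := by
  rw [permLen, card_eq_sum_card_fiberwise (f := Prod.fst) (t := univ) fun _ _ => mem_univ _]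
  refine sum_congr rfl fun k _ => card_nbij' Prod.snd (fun l => (k, l)) ?_ ?_ ?_ ?_
  · rintro ⟨k', l⟩ h
    simp only [coe_filter, mem_filter, mem_univ, true_and] at h ⊢
    exact h.2 ▸ h.1
  all_goals intro _ _; simp_all [Prod.ext_iff]

lemma card_filter_gt_eq_add (p : Fin n → Prop) [DecidablePred p] {a b : Fin n} (hab : a < b) :
    #{m | a < m ∧ p m} =
      #{m | a < m ∧ m < b ∧ p m} + (if p b then 1 else 0) + #{m | b < m ∧ p m} := by
  rw [← Fintype.sum_ite_eq' b fun _ => if p b then 1 else 0]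
  simp only [card_filter, ← sum_add_distrib]
  refine sum_congr rfl fun m _ => ?_
  rcases lt_trichotomy m b with h | rfl | h
  · simp [h, h.ne, h.not_gt]
  · simp [hab]
  · simp [h, h.ne', h.not_gt, hab.trans h]

lemma Mmat_eq_card (u : Perm (Fin n)) (a b : Fin n) :
    Mmat u a b = #{k | a < k ∧ k < b ∧ u k < u a} := rfl

def rectInterior (u : Perm (Fin n)) (a b : Fin n) : Finset (Fin n) :=
  {k | a < k ∧ k < b ∧ u a < u k ∧ u k < u b}

variable {u : Perm (Fin n)} {a b : Fin n}

lemma permCode_mul_swap (u : Perm (Fin n)) (a b k : Fin n) :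
    permCode (u * swap a b) k = #{m | k < swap a b m ∧ u m < u (swap a b k)} :=
  card_equiv (swap a b) fun m => by
    rw [mem_filter_univ, mem_filter_univ, swap_apply_self]; rfl

lemma permCode_mul_swap_of_lt_or_gt {k : Fin n} (hab : a < b) (hk : k < a ∨ b < k) :
    permCode (u * swap a b) k = permCode u k := by
  have hka : k ≠ a := by rintro rfl; omega
  have hkb : k ≠ b := by rintro rfl; omega
  rw [permCode_mul_swap, swap_apply_of_ne_of_ne hka hkb, permCode]
  congr 1
  ext m
  simp only [mem_filter_univ]
  rw [swap_apply_def]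
  split_ifs with hma hmb <;> subst_vars <;> omega

lemma permCode_mul_swap_add_of_lt_of_lt {k : Fin n} (hak : a < k) (hkb : k < b) :
    permCode (u * swap a b) k + (if u b < u k then 1 else 0) =
      permCode u k + (if u a < u k then 1 else 0) := by
  rw [permCode_mul_swap, swap_apply_of_ne_of_ne hak.ne' hkb.ne, permCode,
    ← Fintype.sum_ite_eq' b fun _ => if u b < u k then 1 else 0,
    ← Fintype.sum_ite_eq' a fun _ => if u a < u k then 1 else 0]
  simp only [card_filter, ← sum_add_distrib]
  refine sum_congr rfl fun m _ => ?_
  rcases eq_or_ne m a with rfl | hma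
  · simp [hak.not_gt, hkb, (hak.trans hkb).ne]
  rcases eq_or_ne m b with rfl | hmb
  · simp [hak.not_gt, hkb, hma]
  · simp [swap_apply_of_ne_of_ne hma hmb, hma, hmb]

lemma permCode_mul_swap_sub (hab : a < b) (hu : u a < u b) {k : Fin n} (hka : k ≠ a)
    (hkb : k ≠ b) :
    (permCode (u * swap a b) k : ℤ) - permCode u k =
      if k ∈ rectInterior u a b then 1 else 0 := by
  simp only [rectInterior, mem_filter_univ]
  rcases lt_or_gt_of_ne hka with hk | hak
  · simp [permCode_mul_swap_of_lt_or_gt hab (.inl hk), hk.not_gt]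
  rcases lt_or_gt_of_ne hkb with hkb' | hk
  · have key := permCode_mul_swap_add_of_lt_of_lt (u := u) hak hkb'
    have hne : u k ≠ u b := u.injective.ne hkb
    simp only [hak, hkb', true_and]
    split_ifs at key ⊢ <;> omega
  · simp [permCode_mul_swap_of_lt_or_gt hab (.inr hk), hk.not_gt]

lemma permCode_mul_swap_left (hab : a < b) (hu : u a < u b) :
    permCode (u * swap a b) a = #{m | a < m ∧ u m < u b} + 1 := by
  rw [permCode_mul_swap, swap_apply_left,
    ← card_insert_of_notMem (a := a) (s := {m | a < m ∧ u m < u b}) (by simp)]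
  congr 1
  ext m
  rw [mem_filter_univ, mem_insert, mem_filter_univ]
  rcases eq_or_ne m a with rfl | hma
  · simp [hab, hu]
  rcases eq_or_ne m b with rfl | hmb
  · simp [hma]
  · simp [swap_apply_of_ne_of_ne hma hmb, hma]

lemma permCode_mul_swap_right (hab : a < b) :
    permCode (u * swap a b) b = #{m | b < m ∧ u m < u a} := by
  rw [permCode_mul_swap, swap_apply_right]
  congr 1
  ext m
  rw [mem_filter_univ, mem_filter_univ]
  rcases eq_or_ne m a with rfl | hma
  · simp [hab.not_gt]
  rcases eq_or_ne m b with rfl | hmb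
  · simp [hab.not_gt]
  · simp [swap_apply_of_ne_of_ne hma hmb]

lemma card_lt_right_eq_Mmat_add (hu : u a < u b) :
    #{m | a < m ∧ m < b ∧ u m < u b} = Mmat u a b + #(rectInterior u a b) := by
  rw [Mmat_eq_card, rectInterior, ← card_union_of_disjoint]
  · congr 1
    ext m
    simp only [mem_filter_univ, mem_union]
    have := u.injective.ne (a₁ := m) (a₂ := a)
    constructor
    · rintro ⟨ham, hmb, hmu⟩
      rcases lt_or_gt_of_ne (this ham.ne') with h | h
      · exact .inl ⟨ham, hmb, h⟩
      · exact .inr ⟨ham, hmb, h, hmu⟩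
    · rintro (⟨ham, hmb, h⟩ | ⟨ham, hmb, -, h⟩)
      exacts [⟨ham, hmb, h.trans hu⟩, ⟨ham, hmb, h⟩]
  · simp only [disjoint_filter]
    intro m _ h h'
    exact h.2.2.not_gt h'.2.2.1

lemma permCode_eq_Mmat_add (hab : a < b) (hu : u a < u b) :
    permCode u a = Mmat u a b + permCode (u * swap a b) b := by
  rw [permCode_mul_swap_right hab, Mmat_eq_card, permCode, card_filter_gt_eq_add _ hab,
    if_neg hu.not_gt, add_zero]

lemma permCode_mul_swap_left_eq (hab : a < b) (hu : u a < u b) :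
    permCode (u * swap a b) a = Mmat u a b + #(rectInterior u a b) + permCode u b + 1 := by
  rw [permCode_mul_swap_left hab hu, card_filter_gt_eq_add _ hab, if_neg (lt_irrefl _),
    add_zero, card_lt_right_eq_Mmat_add hu, permCode]

lemma Mmat_mul_swap (hu : u a < u b) :
    Mmat (u * swap a b) a b = Mmat u a b + #(rectInterior u a b) := by
  rw [Mmat_eq_card, ← card_lt_right_eq_Mmat_add hu]
  congr 1
  ext m
  simp only [mem_filter_univ]
  refine and_congr_right fun ham => and_congr_right fun hmb => ?_
  rw [Perm.mul_apply, Perm.mul_apply, swap_apply_of_ne_of_ne ham.ne' hmb.ne, swap_apply_left]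

lemma permCode_mul_swap_right_le (hab : a < b) (hu : u a < u b) :
    permCode (u * swap a b) b ≤ permCode u b := by
  rw [permCode_mul_swap_right hab]
  exact card_le_card (monotone_filter_right _ fun m _ h => ⟨h.1, h.2.trans hu⟩)

lemma permCode_lt_permCode_mul_swap_left (hab : a < b) (hu : u a < u b) :
    permCode u a < permCode (u * swap a b) a := by
  rw [permCode_mul_swap_left hab hu, Nat.lt_succ_iff]
  exact card_le_card (monotone_filter_right _ fun m _ h => ⟨h.1, h.2.trans hu⟩)

lemma permLen_mul_swap (hab : a < b) (hu : u a < u b) :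
    permLen (u * swap a b) = permLen u + 2 * #(rectInterior u a b) + 1 := by
  set d : Fin n → ℤ := fun k => (permCode (u * swap a b) k : ℤ) - permCode u k
  have hd : ∀ k, d k = (if k ∈ rectInterior u a b then 1 else 0) + (if k = a then d a else 0)
      + (if k = b then d b else 0) := by
    intro k
    rcases eq_or_ne k a with rfl | hka
    · simp [rectInterior, hab.ne]
    rcases eq_or_ne k b with rfl | hkb
    · simp [rectInterior, hka]
    · simp [hka, hkb, d, permCode_mul_swap_sub hab hu hka hkb]
  have hsum : ∑ k, d k = #(rectInterior u a b) + d a + d b := by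
    rw [sum_congr rfl fun k _ => hd k, sum_add_distrib, sum_add_distrib, sum_boole,
      Fintype.sum_ite_eq', Fintype.sum_ite_eq']
    simp
  have hA := permCode_mul_swap_left_eq hab hu
  have hB := permCode_eq_Mmat_add hab hu
  simp only [d, sum_sub_distrib, ← Nat.cast_sum, ← permLen_eq_sum_permCode] at hsum
  omega

end SwapCode

section Bruhat

variable {n : ℕ} {u : Perm (Fin n)} {a b : Fin n}

lemma permLen_lt_of_bruhatLT {x y : Perm (Fin n)} (h : bruhatLT x y) : permLen x < permLen y := by
  induction h with
  | single h => exact h.2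
  | tail _ h ih => exact ih.trans h.2

lemma bruhatStep_mul_swap (hab : a < b) (hu : u a < u b) : bruhatStep u (u * swap a b) :=
  ⟨⟨a, b, hab.ne, rfl⟩, by rw [permLen_mul_swap hab hu]; omega⟩

lemma not_bruhatCovers_mul_swap (hab : a < b) (hu : u a < u b) :
    ¬ bruhatCovers u (u * swap a b) := fun h => by
  have := permLen_lt_of_bruhatLT h.1
  rw [permLen_mul_swap hab hu] at this
  omega

lemma bruhatCovers_mul_swap_iff (hab : a < b) (hu : u a < u b) :
    bruhatCovers (u * swap a b) u ↔ rectInterior u a b = ∅ := by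
  constructor
  · intro hcov
    by_contra hne
    obtain ⟨k, hk⟩ := nonempty_iff_ne_empty.2 hne
    simp only [rectInterior, mem_filter_univ] at hk
    obtain ⟨hak, hkb, hak', hkb'⟩ := hk
    -- the chain `u < u (a k) < u (a k) (k b) < u (a k) (k b) (a k) = u (a b)`
    have hswap : swap a k * swap k b * swap a k = swap a b := by
      rw [swap_comm a k, swap_comm k b, swap_mul_swap_mul_swap hkb.ne' hab.ne']
    have h₁ := bruhatStep_mul_swap (u := u) hak hak'
    have h₂ := bruhatStep_mul_swap (u := u * swap a k) hkb
      (by simpa [swap_apply_of_ne_of_ne hab.ne' hkb.ne'] using hu)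
    have h₃ : bruhatStep (u * swap a k * swap k b) (u * swap a b) := by
      rw [← hswap, ← mul_assoc, ← mul_assoc]
      exact bruhatStep_mul_swap hak
        (by simpa [swap_apply_of_ne_of_ne hak.ne hab.ne,
          swap_apply_of_ne_of_ne hab.ne' hkb.ne'] using hkb')
    exact hcov.2 _ (.single h₁) (.head h₂ (.single h₃))
  · intro hempty
    have hlen := permLen_mul_swap hab hu
    rw [hempty, card_empty] at hlen
    refine ⟨.single ⟨⟨a, b, hab.ne, rfl⟩, by omega⟩, fun z h₁ h₂ => ?_⟩
    have := permLen_lt_of_bruhatLT h₁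
    have := permLen_lt_of_bruhatLT h₂
    omega

end Bruhat

/-- Characterization of Bruhat coverings via the Lehmer code: `w` covers `w' = w·(i,j)`
iff (a1) `α'ᵢ ≤ αᵢ - 1`, (a2) `α'ⱼ = αⱼ + αᵢ - α'ᵢ - 1` (stated additively as
`α'ⱼ + α'ᵢ + 1 = αⱼ + αᵢ`), (a3) `α'ₖ = αₖ` for `k ≠ i, j`, and (a4)
`M_{i,j}(w) = M_{i,j}(w') = α'ᵢ - αⱼ` (stated additively). -/
theorem bruhat_covers_iff_code {n : ℕ} (w w' : Equiv.Perm (Fin n)) (i j : Fin n)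
    (hij : i < j) (hw' : w' = w * Equiv.swap i j) :
    bruhatCovers w w' ↔
      (permCode w' i + 1 ≤ permCode w i ∧
       permCode w' j + permCode w' i + 1 = permCode w j + permCode w i ∧
       (∀ k : Fin n, k ≠ i → k ≠ j → permCode w' k = permCode w k) ∧
       (Mmat w i (j : ℕ) = Mmat w' i (j : ℕ) ∧
        Mmat w i (j : ℕ) + permCode w j = permCode w' i)) := by
  subst hw'
  rcases lt_or_gt_of_ne (w.injective.ne hij.ne) with hlt | hgt
  · have := permCode_lt_permCode_mul_swap_left hij hlt
    exact iff_of_false (not_bruhatCovers_mul_swap hij hlt) fun ⟨ha₁, _⟩ => by omega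
  obtain ⟨u, rfl⟩ : ∃ u, w = u * swap i j := ⟨w * swap i j, by simp⟩
  have hu : u i < u j := by simpa using hgt
  rw [mul_swap_mul_self, bruhatCovers_mul_swap_iff hij hu, ← card_eq_zero]
  have hA := permCode_mul_swap_left_eq hij hu
  have hB := permCode_eq_Mmat_add hij hu
  have hC := permCode_mul_swap_right_le hij hu
  have hD := Mmat_mul_swap hu
  constructor
  · intro h0
    refine ⟨by omega, by omega, fun k hki hkj => ?_, by omega, by omega⟩
    have := permCode_mul_swap_sub hij hu hki hkj
    simp only [card_eq_zero.1 h0, notMem_empty, if_false] at this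
    omega
  · rintro ⟨-, -, -, hM, -⟩
    omega
end

section
/- Given 0 ≤ i ≤ n-2, the 2×2 rotation relation in SO(n): for all t ∈ ℝ, exp(t A_i) · exp((π/2) A_{i+1}) · exp((π/2) A_i) = exp((π/2) A_{i+1}) · exp((π/2) A_i) · exp(t A_{i+1}), where A_i = E_{i,i+1} − E_{i+1,i} is the standard skew-symmetric generator. -/
/-!
With `A = Amat p q` one has `A³ = -A`, so `exp (θ A) = 1 + sin θ • A + (1 - cos θ) • A²`
(Rodrigues' formula); in particular the quarter turn `exp ((π/2) A)` is the polynomial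
`1 + A + A²`. A direct matrix computation then shows that `G = exp ((π/2) A₁) exp ((π/2) A₀)`
intertwines the generators, `A₀ G = G A₁`, and exponentiating `t A₀ G = G (t A₁)` gives the relation.
-/

open NormedSpace Real

/-- The standard skew-symmetric generator `A_i = E_{i,i+1} − E_{i+1,i}`, given here by a
pair of indices `p, q` standing for `i` and `i+1`. -/
def Amat {n : ℕ} (p q : Fin n) : Matrix (Fin n) (Fin n) ℝ :=
  Matrix.single p q 1 - Matrix.single q p 1

section BanachAlgebra

variable {𝔸 : Type*} [NormedRing 𝔸] [NormedAlgebra ℝ 𝔸] [CompleteSpace 𝔸]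

theorem exp_smul_of_mul_mul_self_eq_neg {A : 𝔸} (h : A * A * A = -A) (θ : ℝ) :
    exp (θ • A) = 1 + sin θ • A + (1 - cos θ) • (A * A) := by
  set f : ℝ → 𝔸 := fun s => 1 + sin s • A + (1 - cos s) • (A * A)
  have hf : ∀ s, HasDerivAt f (A * f s) s := by
    intro s
    have hA : A * f s = cos s • A + sin s • (A * A) := by
      simp only [f, mul_add, mul_one, mul_smul_comm, ← mul_assoc, h]
      module
    rw [hA]
    refine ((((hasDerivAt_sin s).smul_const A).const_add 1).add
      (((hasDerivAt_cos s).const_sub 1).smul_const (A * A))).congr_deriv ?_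
    simp
  -- `s ↦ exp ((θ - s) • A) * f s` is constant, with value `exp (θ • A)` at `0` and `f θ` at `θ`.
  have hg : ∀ s, HasDerivAt (fun s => exp ((θ - s) • A) * f s) 0 s := by
    intro s
    have hE : HasDerivAt (fun s => exp ((θ - s) • A)) (-(A * exp ((θ - s) • A))) s := by
      simpa [Function.comp_def] using
        (hasDerivAt_exp_smul_const' A (θ - s)).scomp s ((hasDerivAt_id s).const_sub θ)
    convert hE.fun_mul (hf s) using 1
    rw [← mul_assoc, ← ((Commute.refl A).smul_right (θ - s)).exp_right.eq]
    noncomm_ring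
  have hconst := is_const_of_deriv_eq_zero (fun s => (hg s).differentiableAt) (fun s => (hg s).deriv)
  simpa [f] using hconst 0 θ

end BanachAlgebra

namespace Matrix

variable {m : Type*} [Fintype m] [DecidableEq m]

theorem exp_smul_of_mul_mul_self_eq_neg {A : Matrix m m ℝ} (h : A * A * A = -A) (θ : ℝ) :
    exp (θ • A) = 1 + sin θ • A + (1 - cos θ) • (A * A) :=
  open scoped Norms.Operator in _root_.exp_smul_of_mul_mul_self_eq_neg h θ

theorem semiconjBy_exp {G A B : Matrix m m ℝ} (h : SemiconjBy G A B) :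
    SemiconjBy G (exp A) (exp B) :=
  open scoped Norms.Operator in h.exp_right

end Matrix

section Amat

variable {n : ℕ} {p q r : Fin n}

theorem Amat_mul_mul_self (h : p ≠ q) : Amat p q * Amat p q * Amat p q = -Amat p q := by
  simp only [Amat, sub_mul, mul_sub]
  simp only [ne_eq, h, h.symm, not_false_eq_true, Matrix.single_mul_single_of_ne, zero_mul,
    Matrix.single_mul_single_same, mul_one, sub_self, sub_zero, zero_sub, sub_neg_eq_add, neg_sub]
  abel

theorem exp_pi_div_two_smul_Amat (h : p ≠ q) :
    exp ((π / 2) • Amat p q) = 1 + Amat p q + Amat p q * Amat p q := by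
  simp [Matrix.exp_smul_of_mul_mul_self_eq_neg (Amat_mul_mul_self h)]

theorem semiconjBy_exp_pi_div_two_smul_Amat (hpq : p ≠ q) (hqr : q ≠ r) (hpr : p ≠ r) :
    SemiconjBy (exp ((π / 2) • Amat q r) * exp ((π / 2) • Amat p q)) (Amat q r) (Amat p q) := by
  rw [SemiconjBy, exp_pi_div_two_smul_Amat hpq, exp_pi_div_two_smul_Amat hqr]
  simp only [Amat, sub_mul, mul_sub, add_mul, mul_add, mul_one, one_mul]
  simp only [ne_eq, hpq, hqr, hpr, hpq.symm, hqr.symm, hpr.symm, not_false_eq_true,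
    Matrix.single_mul_single_of_ne, Matrix.single_mul_single_same, mul_one, mul_zero, zero_mul,
    sub_self, sub_zero, zero_sub, sub_neg_eq_add, add_zero, zero_add, add_neg_cancel,
    add_neg_cancel_comm, neg_add_cancel_comm]
  abel

end Amat

/-- The rotation relation in `SO(n)`:
`exp(t A_i) exp((π/2) A_{i+1}) exp((π/2) A_i) = exp((π/2) A_{i+1}) exp((π/2) A_i) exp(t A_{i+1})`. -/
theorem rotation_relation {n : ℕ} (i₀ i₁ i₂ : Fin n)
    (h₁ : (i₁ : ℕ) = (i₀ : ℕ) + 1) (h₂ : (i₂ : ℕ) = (i₁ : ℕ) + 1) (t : ℝ) :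
    exp (t • Amat i₀ i₁) * exp ((π / 2) • Amat i₁ i₂) * exp ((π / 2) • Amat i₀ i₁)
      = exp ((π / 2) • Amat i₁ i₂) * exp ((π / 2) • Amat i₀ i₁) *
          exp (t • Amat i₁ i₂) := by
  have h₀₁ : i₀ ≠ i₁ := Fin.ne_of_val_ne (by omega)
  have h₁₂ : i₁ ≠ i₂ := Fin.ne_of_val_ne (by omega)
  have h₀₂ : i₀ ≠ i₂ := Fin.ne_of_val_ne (by omega)
  have hG := Matrix.semiconjBy_exp
    ((semiconjBy_exp_pi_div_two_smul_Amat h₀₁ h₁₂ h₀₂).smul_right t)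
  rw [mul_assoc]
  exact hG.eq.symm
end

section
/- For A_i = E_{i,i+1} − E_{i+1,i} in M_n(ℝ) and any t ∈ ℝ, the matrix (exp((π/2)A_{i+1}) exp(−t A_i) exp((π/2)A_{i+1}))^{-1} · exp((π/2)A_i) exp(t A_{i+1}) exp((π/2)A_i) equals the diagonal matrix with entries 1 everywhere except −1 at positions i and i+2. -/
/-!
Write `A_{j,k} = E_{j,k} − E_{k,j}`. Quarter turns permute these generators up to sign:
`exp((π/2)A_{i+1})` conjugates `A_i` into `A_{i+2,i} = -A_{i,i+2}`, and `exp((π/2)A_i)`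
conjugates `A_{i+1}` into `A_{i,i+2}`. Hence the two triple products are
`exp(t A_{i,i+2}) exp(π A_{i+1})` and `exp(t A_{i,i+2}) exp(π A_i)`, so the quotient is
`exp(π A_{i+1})⁻¹ exp(π A_i)`, a product of two diagonal sign matrices.
-/

open NormedSpace Real

section RotationFormula

variable {𝔸 : Type*} [NormedRing 𝔸] [NormedAlgebra ℝ 𝔸] [CompleteSpace 𝔸]

theorem exp_smul_of_pow_three_eq_neg {A : 𝔸} (hA : A ^ 3 = -A) (t : ℝ) :
    exp (t • A) = 1 + sin t • A + (1 - cos t) • A ^ 2 := by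
  set g : ℝ → 𝔸 := fun u => 1 + sin u • A + (1 - cos u) • A ^ 2
  have hg : ∀ u, HasDerivAt g (A * g u) u := by
    intro u
    have hAg : A * g u = cos u • A + sin u • A ^ 2 := by
      have hA3 : A * A ^ 2 = -A := by rw [← pow_succ', hA]
      simp only [g, mul_add, mul_one, mul_smul_comm, ← sq, hA3]
      module
    rw [hAg]
    have := ((hasDerivAt_const u (1 : 𝔸)).add ((hasDerivAt_sin u).smul_const A)).add
      (((hasDerivAt_const u (1 : ℝ)).sub (hasDerivAt_cos u)).smul_const (A ^ 2))
    exact this.congr_deriv (by simp)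
  -- `g' = A g`, so `u ↦ exp ((t - u) • A) * g u` is constant
  have hconst : ∀ u, HasDerivAt (fun u => exp ((t - u) • A) * g u) 0 u := by
    intro u
    have he := (hasDerivAt_exp_smul_const A (t - u)).scomp u ((hasDerivAt_id u).const_sub t)
    exact (he.mul (hg u)).congr_deriv (by simp [mul_assoc])
  simpa [g] using is_const_of_deriv_eq_zero (fun u => (hconst u).differentiableAt)
    (fun u => (hconst u).deriv) 0 t

end RotationFormula

section MatrixExp

open scoped Matrix.Norms.Operator

variable {m : Type*} [Fintype m] [DecidableEq m]

theorem SemiconjBy.exp_right_matrix {X A B : Matrix m m ℝ} (h : SemiconjBy X A B) :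
    SemiconjBy X (exp A) (exp B) :=
  h.exp_right

theorem Matrix.exp_smul_of_pow_three_eq_neg {A : Matrix m m ℝ} (hA : A ^ 3 = -A) (t : ℝ) :
    exp (t • A) = 1 + sin t • A + (1 - cos t) • A ^ 2 :=
  _root_.exp_smul_of_pow_three_eq_neg hA t

theorem Matrix.exp_pi_div_two_smul_mul_self (M : Matrix m m ℝ) :
    exp ((π / 2) • M) * exp ((π / 2) • M) = exp (π • M) := by
  rw [← Matrix.exp_add_of_commute _ _ (Commute.refl _), ← add_smul, add_halves]

end MatrixExp

section Generators

open Matrix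

variable {n : ℕ} {a b c : Fin n}

theorem Amat_swap : Amat b a = -Amat a b := by
  simp [Amat]

theorem Amat_sq (hab : a ≠ b) : Amat a b ^ 2 = -(single a a 1 + single b b 1) := by
  simp only [Amat, sq, sub_mul, mul_sub, mul_one, single_mul_single_same, single_mul_single_of_ne,
    ne_eq, not_false_eq_true, hab, hab.symm]
  abel

theorem Amat_pow_three (hab : a ≠ b) : Amat a b ^ 3 = -Amat a b := by
  rw [pow_succ, Amat_sq hab]
  simp only [Amat, add_mul, mul_sub, neg_mul, mul_one, single_mul_single_same,
    single_mul_single_of_ne, ne_eq, not_false_eq_true, hab, hab.symm]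
  abel

theorem exp_pi_div_two_smul_Amat_s15 (hab : a ≠ b) :
    exp ((π / 2) • Amat a b) = 1 + Amat a b + Amat a b ^ 2 := by
  simp [Matrix.exp_smul_of_pow_three_eq_neg (Amat_pow_three hab)]

theorem exp_pi_smul_Amat (hab : a ≠ b) :
    exp (π • Amat a b) = diagonal (fun k => if k = a ∨ k = b then -1 else 1) := by
  rw [Matrix.exp_smul_of_pow_three_eq_neg (Amat_pow_three hab), Amat_sq hab]
  ext i j
  simp only [sin_pi, cos_pi, zero_smul, add_zero, Matrix.add_apply, Matrix.smul_apply,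
    Matrix.neg_apply, single_apply, one_apply, diagonal_apply, smul_eq_mul]
  split_ifs <;> grind

theorem semiconjBy_exp_pi_div_two_smul_Amat_s15 (hab : a ≠ b) (hbc : b ≠ c) (hac : a ≠ c) :
    SemiconjBy (exp ((π / 2) • Amat a b)) (Amat b c) (Amat a c) := by
  rw [SemiconjBy, exp_pi_div_two_smul_Amat_s15 hab, Amat_sq hab]
  simp only [Amat, add_mul, mul_add, sub_mul, mul_sub, neg_mul, mul_neg, one_mul, mul_one,
    single_mul_single_same, single_mul_single_of_ne, ne_eq, not_false_eq_true, hab,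
    hbc, hbc.symm, hac, hac.symm]
  abel

theorem semiconjBy_exp_pi_div_two_smul_Amat' (hab : a ≠ b) (hbc : b ≠ c) (hac : a ≠ c) :
    SemiconjBy (exp ((π / 2) • Amat b c)) (Amat a b) (Amat c a) := by
  rw [SemiconjBy, exp_pi_div_two_smul_Amat_s15 hbc, Amat_sq hbc]
  simp only [Amat, add_mul, mul_add, sub_mul, mul_sub, neg_mul, mul_neg, one_mul, mul_one,
    single_mul_single_same, single_mul_single_of_ne, ne_eq, not_false_eq_true, hab,
    hab.symm, hbc.symm, hac, hac.symm]
  abel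

end Generators

/-- `(exp((π/2)A_{i+1}) exp(−t A_i) exp((π/2)A_{i+1}))⁻¹ · exp((π/2)A_i) exp(t A_{i+1}) exp((π/2)A_i)`
is the diagonal matrix with `−1` at positions `i` and `i+2` and `1` elsewhere. -/
theorem braid_diag_relation {n : ℕ} (i₀ i₁ i₂ : Fin n)
    (h₁ : (i₁ : ℕ) = (i₀ : ℕ) + 1) (h₂ : (i₂ : ℕ) = (i₁ : ℕ) + 1) (t : ℝ) :
    (exp ((π / 2) • Amat i₁ i₂) * exp ((-t) • Amat i₀ i₁) *
        exp ((π / 2) • Amat i₁ i₂))⁻¹ *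
      (exp ((π / 2) • Amat i₀ i₁) * exp (t • Amat i₁ i₂) *
        exp ((π / 2) • Amat i₀ i₁))
      = Matrix.diagonal (fun k : Fin n => if k = i₀ ∨ k = i₂ then (-1 : ℝ) else 1) := by
  have h01 : i₀ ≠ i₁ := Fin.ne_of_val_ne (by omega)
  have h12 : i₁ ≠ i₂ := Fin.ne_of_val_ne (by omega)
  have h02 : i₀ ≠ i₂ := Fin.ne_of_val_ne (by omega)
  set E := exp (t • Amat i₀ i₂)
  have hleft : exp ((π / 2) • Amat i₁ i₂) * exp ((-t) • Amat i₀ i₁) *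
      exp ((π / 2) • Amat i₁ i₂) = E * exp (π • Amat i₁ i₂) := by
    have hconj := ((semiconjBy_exp_pi_div_two_smul_Amat' h01 h12 h02).smul_right (-t)).exp_right_matrix
    rw [hconj.eq, neg_smul, ← smul_neg, ← Amat_swap, mul_assoc,
      Matrix.exp_pi_div_two_smul_mul_self]
  have hright : exp ((π / 2) • Amat i₀ i₁) * exp (t • Amat i₁ i₂) *
      exp ((π / 2) • Amat i₀ i₁) = E * exp (π • Amat i₀ i₁) := by
    have hconj := ((semiconjBy_exp_pi_div_two_smul_Amat_s15 h01 h12 h02).smul_right t).exp_right_matrix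
    rw [hconj.eq, mul_assoc, Matrix.exp_pi_div_two_smul_mul_self]
  have hE : IsUnit E.det := (Matrix.isUnit_iff_isUnit_det _).mp (Matrix.isUnit_exp _)
  rw [hleft, hright, Matrix.mul_inv_rev, mul_assoc, Matrix.nonsing_inv_mul_cancel_left _ _ hE,
    ← Matrix.exp_neg, ← smul_neg, ← Amat_swap, exp_pi_smul_Amat h12.symm,
    exp_pi_smul_Amat h01, Matrix.diagonal_mul_diagonal]
  congr 1
  funext k
  split_ifs <;> grind
end
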